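/- Let H_0, ..., H_{K-1} be d×d matrices, α ∈ R, define P_i = ∏_{k=K-i}^{K-1}(I - α H_k) with P_0 = I, fix 1 ≤ L ≤ K, and set k_0 = −1. Define matrix operators B^i(M) = P_i − α Σ_{k=k_{L-1-i}+1}^{K-1-i} H_k · M acting on d×d matrices (for i = 0,...,L−1, where the summation index k plays the role of k_{L-i} and the lower limit depends on the previously fixed index k_{L-1-i}). Then the nested composition B^{L-1}(B^{L-2}(...B^0(I)...)) equals I + Σ_{l=1}^{L} Σ_{0≤k_1<...<k_l<K} ∏_{i=1}^{l}(-α H_{k_i}). -/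

import Mathlib

open Matrix Finset

variable {d : ℕ}

/-- Operator (spectral) norm of a real `d × d` matrix, acting on Euclidean space. -/
noncomputable def matOpNorm (M : Matrix (Fin d) (Fin d) ℝ) : ℝ :=
  ‖Matrix.toEuclideanCLM (𝕜 := ℝ) M‖

/-- Apply a matrix to a vector of Euclidean space. -/
noncomputable def applyM (M : Matrix (Fin d) (Fin d) ℝ) (g : EuclideanSpace ℝ (Fin d)) :
    EuclideanSpace ℝ (Fin d) :=
  Matrix.toEuclideanCLM (𝕜 := ℝ) M g

/-- Ordered product `∏_{k=a}^{a+n-1} (I - α H k)`, factors ordered by increasing `k`. -/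
def mulList (H : ℕ → Matrix (Fin d) (Fin d) ℝ) (α : ℝ) (a n : ℕ) :
    Matrix (Fin d) (Fin d) ℝ :=
  ((List.range' a n).map (fun k => (1 : Matrix (Fin d) (Fin d) ℝ) - α • H k)).prod

/-- Truncated binomial expansion
`I + Σ_{l=1}^{L} Σ_{0 ≤ k₁ < … < k_l < K} ∏_{i=1}^{l} (-α H_{k_i})`,
with each inner product ordered by increasing index. -/
def binomSum (H : ℕ → Matrix (Fin d) (Fin d) ℝ) (α : ℝ) (K L : ℕ) :
    Matrix (Fin d) (Fin d) ℝ :=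
  1 + ∑ l ∈ Finset.Icc 1 L, ∑ s ∈ (Finset.range K).powersetCard l,
      ((s.sort (· ≤ ·)).map (fun k => -(α • H k))).prod

/-- The cascade of matrix operators from Proposition 3.1: `casc H α K i q` is the value of
`B^i B^{i-1} ⋯ B^0 I` when the previous summation index satisfies `k_{L-1-i} + 1 = q`
(the outermost call uses `q = 0`, corresponding to the dummy index `k₀ = -1`).
Here `B^i M = P_i - α Σ_{k = k_{L-1-i}+1}^{K-1-i} H_k M`, with `P_i = mulList H α (K-i) i`
the ordered product of the last `i` factors `I - α H_k`. -/
def casc (H : ℕ → Matrix (Fin d) (Fin d) ℝ) (α : ℝ) (K : ℕ) :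
    ℕ → ℕ → Matrix (Fin d) (Fin d) ℝ
  | 0, q => mulList H α K 0 - α • ∑ k ∈ Finset.Ico q K, H k
  | (i + 1), q =>
      mulList H α (K - (i + 1)) (i + 1)
        - α • ∑ k ∈ Finset.Ico q (K - (i + 1)), H k * casc H α K i (k + 1)

/-!
Write `f k = -α H k` and let `T_m(q)` be the sum of the ordered products `∏_{k ∈ s} f k` over the
subsets `s ⊆ [q, K)` with at most `m` elements. Grouping subsets by their least element gives
`T_{m+1}(q) = 1 + Σ_{q ≤ k < K} f k T_m(k+1)`, and `T_m(q) = ∏_{k=q}^{K-1} (1 + f k)` as soon as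
`m ≥ K - q`. By induction on `i`, the `i`-th cascade started after index `q - 1` is `T_{i+1}(q)`:
the sum in `B^i` runs over the least elements `k < K - 1 - i`, while the subsets whose least
element is at least `K - 1 - i` are never truncated and add up to `P_i`. The binomial sum is
`T_L(0)`.
-/

section OrderedExpansion

variable {R : Type*} [Ring R] (f : ℕ → R)

def sortedProd (s : Finset ℕ) : R :=
  ((s.sort (· ≤ ·)).map f).prod

/-- Noncommutative elementary symmetric polynomial of degree `l` in `f q, …, f (K - 1)`. -/
def orderedEsymm (q K l : ℕ) : R :=
  ∑ s ∈ (Ico q K).powersetCard l, sortedProd f s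

/-- The terms of degree at most `m` in the expansion of `∏_{k=q}^{K-1} (1 + f k)`. -/
def truncProdExpansion (q K m : ℕ) : R :=
  ∑ l ∈ range (m + 1), orderedEsymm f q K l

variable {f}

lemma sortedProd_insert_of_lt {a : ℕ} {s : Finset ℕ} (h : ∀ b ∈ s, a < b) :
    sortedProd f (insert a s) = f a * sortedProd f s := by
  have ha : a ∉ s := fun ha => lt_irrefl a (h a ha)
  rw [sortedProd, Finset.sort_insert (· ≤ ·) (fun b hb => (h b hb).le) ha, List.map_cons,
    List.prod_cons, sortedProd]

@[simp]
lemma orderedEsymm_zero (q K : ℕ) : orderedEsymm f q K 0 = 1 := by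
  simp [orderedEsymm, sortedProd]

lemma orderedEsymm_succ_of_le {q K : ℕ} (h : K ≤ q) (l : ℕ) :
    orderedEsymm f q K (l + 1) = 0 := by
  rw [orderedEsymm, Ico_eq_empty_of_le h, powersetCard_eq_empty.mpr (by simp), sum_empty]

/-- Split the subsets of `[q, K)` according to whether they contain their least candidate `q`. -/
lemma orderedEsymm_succ_of_lt {q K : ℕ} (h : q < K) (l : ℕ) :
    orderedEsymm f q K (l + 1)
      = orderedEsymm f (q + 1) K (l + 1) + f q * orderedEsymm f (q + 1) K l := by
  have hq : q ∉ Ico (q + 1) K := by simp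
  rw [orderedEsymm, ← insert_Ico_add_one_left_eq_Ico h, powersetCard_succ_insert hq,
    sum_union, sum_image, orderedEsymm, orderedEsymm, mul_sum]
  · refine congrArg _ (sum_congr rfl fun s hs => ?_)
    exact sortedProd_insert_of_lt fun b hb => (mem_Ico.mp ((mem_powersetCard.mp hs).1 hb)).1
  · intro s hs t ht hst
    have hqs : q ∉ s := fun h => hq ((mem_powersetCard.mp hs).1 h)
    have hqt : q ∉ t := fun h => hq ((mem_powersetCard.mp ht).1 h)
    rw [← erase_insert hqs, ← erase_insert hqt, hst]
  · refine disjoint_left.mpr fun s hs hs' => ?_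
    obtain ⟨t, -, rfl⟩ := mem_image.mp hs'
    exact hq ((mem_powersetCard.mp hs).1 (mem_insert_self q t))

@[simp]
lemma truncProdExpansion_zero (q K : ℕ) : truncProdExpansion f q K 0 = 1 := by
  simp [truncProdExpansion]

lemma truncProdExpansion_of_le {q K : ℕ} (h : K ≤ q) (m : ℕ) :
    truncProdExpansion f q K m = 1 := by
  simp [truncProdExpansion, sum_range_succ', orderedEsymm_succ_of_le h]

lemma truncProdExpansion_succ_of_lt {q K : ℕ} (h : q < K) (m : ℕ) :
    truncProdExpansion f q K (m + 1)
      = truncProdExpansion f (q + 1) K (m + 1) + f q * truncProdExpansion f (q + 1) K m := by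
  simp only [truncProdExpansion, sum_range_succ' _ (m + 1), orderedEsymm_succ_of_lt h,
    sum_add_distrib, orderedEsymm_zero, mul_sum]
  abel

lemma truncProdExpansion_eq_prod {q K m : ℕ} (h : K ≤ q + m) :
    truncProdExpansion f q K m = ((List.range' q (K - q)).map (fun k => 1 + f k)).prod := by
  induction hn : K - q generalizing q m with
  | zero => simp [truncProdExpansion_of_le (f := f) (show K ≤ q by omega)]
  | succ n ih =>
    obtain ⟨m, rfl⟩ : ∃ m', m = m' + 1 := ⟨m - 1, by omega⟩
    rw [truncProdExpansion_succ_of_lt (by omega), ih (by omega) (by omega),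
      ih (by omega) (by omega), List.range'_succ, List.map_cons, List.prod_cons, add_mul, one_mul]

/-- Subsets meeting `[p, r)` are grouped by their least element `k`. -/
lemma truncProdExpansion_succ_eq_add_sum {p r K : ℕ} (hpr : p ≤ r) (hrK : r ≤ K) (m : ℕ) :
    truncProdExpansion f p K (m + 1)
      = truncProdExpansion f r K (m + 1)
        + ∑ k ∈ Ico p r, f k * truncProdExpansion f (k + 1) K m := by
  induction r, hpr using Nat.le_induction with
  | base => simp
  | succ r hpr ih =>
    rw [ih (by omega), truncProdExpansion_succ_of_lt (by omega), sum_Ico_succ_top hpr]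
    abel

end OrderedExpansion

lemma mulList_eq_prod (H : ℕ → Matrix (Fin d) (Fin d) ℝ) (α : ℝ) (a n : ℕ) :
    mulList H α a n = ((List.range' a n).map (fun k => 1 + -(α • H k))).prod := by
  simp only [mulList, sub_eq_add_neg]

lemma casc_eq_truncProdExpansion (H : ℕ → Matrix (Fin d) (Fin d) ℝ) (α : ℝ) {K : ℕ} (i q : ℕ)
    (hq : q + i + 1 ≤ K) :
    casc H α K i q = truncProdExpansion (fun k => -(α • H k)) q K (i + 1) := by
  induction i generalizing q with
  | zero =>
    rw [casc, truncProdExpansion_succ_eq_add_sum (by omega) le_rfl, truncProdExpansion_of_le le_rfl,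
      mulList, List.range'_zero, List.map_nil, List.prod_nil, smul_sum, sub_eq_add_neg,
      ← sum_neg_distrib]
    simp only [truncProdExpansion_zero, mul_one]
  | succ i ih =>
    have hlead : mulList H α (K - (i + 1)) (i + 1)
        = truncProdExpansion (fun k => -(α • H k)) (K - (i + 1)) K (i + 1 + 1) := by
      rw [mulList_eq_prod, truncProdExpansion_eq_prod (by omega),
        show K - (K - (i + 1)) = i + 1 by omega]
    rw [casc, truncProdExpansion_succ_eq_add_sum (r := K - (i + 1)) (by omega) (by omega),
      hlead, sub_eq_add_neg, smul_sum, ← sum_neg_distrib]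
    refine congrArg _ (sum_congr rfl fun k hk => ?_)
    rw [ih (k + 1) (by simp only [mem_Ico] at hk; omega), neg_mul, smul_mul_assoc]

lemma binomSum_eq_truncProdExpansion (H : ℕ → Matrix (Fin d) (Fin d) ℝ) (α : ℝ) (K L : ℕ) :
    binomSum H α K L = truncProdExpansion (fun k => -(α • H k)) 0 K L := by
  rw [binomSum, truncProdExpansion, sum_range_succ', orderedEsymm_zero, add_comm,
    ← Ico_add_one_right_eq_Icc, sum_Ico_eq_sum_range, Nat.add_sub_cancel]
  simp only [orderedEsymm, sortedProd, add_comm 1, ← range_eq_Ico]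

/-- Proposition 3.1: the nested composition `B^{L-1}(B^{L-2}(⋯ B^0(I)⋯))` equals the
truncated binomial expansion `I + Σ_{l=1}^{L} Σ_{0≤k₁<…<k_l<K} ∏_{i=1}^{l}(-α H_{k_i})`. -/
theorem cascade_eq_binomSum (K L : ℕ) (H : ℕ → Matrix (Fin d) (Fin d) ℝ) (α : ℝ)
    (hL1 : 1 ≤ L) (hLK : L ≤ K) :
    casc H α K (L - 1) 0 = binomSum H α K L := by
  obtain ⟨i, rfl⟩ : ∃ i, L = i + 1 := ⟨L - 1, by omega⟩
  rw [binomSum_eq_truncProdExpansion, Nat.add_sub_cancel,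
    casc_eq_truncProdExpansion H α i 0 (by omega)]
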